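/- (Integration by parts mixing Riemann and Caputo differences) Let 0 < α < 1 be non-integer and a < b integers. For functions f, g : ℤ → ℝ, Σ_{s=a+1}^{b−1} g(s)·( ^C∇_a^{α} f)(s) = f(b−1)·( _b∇^{−(1−α)} g)(b−1) − f(a)·( _b∇^{−(1−α)} g)(a) + Σ_{s=a+1}^{b−1} f(s−1)·( _b∇^{α} g)(s−1), where ( _b∇^{−(1−α)} g)(b−1) = g(b−1). -/
import Mathlib


noncomputable def rising (x β : ℝ) : ℝ := Real.Gamma (x + β) / Real.Gamma x

noncomputable def leftSum (β : ℝ) (a : ℤ) (f : ℤ → ℝ) (t : ℤ) : ℝ :=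
  (1 / Real.Gamma β) * ∑ s ∈ Finset.Icc (a + 1) t, rising ((t - s + 1 : ℤ) : ℝ) (β - 1) * f s

noncomputable def rightSum (β : ℝ) (b : ℤ) (g : ℤ → ℝ) (t : ℤ) : ℝ :=
  (1 / Real.Gamma β) * ∑ s ∈ Finset.Icc t (b - 1), rising ((s - t + 1 : ℤ) : ℝ) (β - 1) * g s

/-- nabla left Caputo fractional difference of order 0 < α < 1 -/
noncomputable def caputoLeft (α : ℝ) (a : ℤ) (f : ℤ → ℝ) (t : ℤ) : ℝ :=
  leftSum (1 - α) a (fun s => f s - f (s - 1)) t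

/-- nabla right Riemann fractional difference of order 0 < α < 1 -/
noncomputable def rightRiemann (α : ℝ) (b : ℤ) (g : ℤ → ℝ) (t : ℤ) : ℝ :=
  rightSum (1 - α) b g t - rightSum (1 - α) b g (t + 1)

lemma sum_telescope_aux (F : ℤ → ℝ) (n : ℕ) :
    ∀ a : ℤ, ∑ u ∈ Finset.Icc (a + 1) (a + n), (F u - F (u - 1)) = F (a + n) - F a := by
  induction n with
  | zero => intro a; simp
  | succ n ih =>
      intro a
      have h0 : a + (n + 1 : ℕ) = (a + n) + 1 := by push_cast; ring
      have hins : Finset.Icc (a + 1) (a + n + 1)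
          = insert (a + (n : ℤ) + 1) (Finset.Icc (a + 1) (a + n)) := by
        ext x; simp only [Finset.mem_insert, Finset.mem_Icc]; omega
      have hnm : (a + (n : ℤ) + 1) ∉ Finset.Icc (a + 1) (a + (n : ℤ)) := by
        simp only [Finset.mem_Icc]; omega
      rw [h0, hins, Finset.sum_insert hnm, ih]
      have h1 : (a + n : ℤ) + 1 - 1 = a + n := by ring
      rw [h1]; ring

lemma sum_telescope_Icc (a b : ℤ) (h : a ≤ b) (F : ℤ → ℝ) :
    ∑ u ∈ Finset.Icc (a + 1) b, (F u - F (u - 1)) = F b - F a := by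
  have hb : b = a + ((b - a).toNat : ℤ) := by omega
  rw [hb]
  exact sum_telescope_aux F (b - a).toNat a

lemma sum_swap_Icc (A B : ℤ) (F : ℤ → ℤ → ℝ) :
    ∑ s ∈ Finset.Icc A B, ∑ u ∈ Finset.Icc A s, F s u
      = ∑ u ∈ Finset.Icc A B, ∑ s ∈ Finset.Icc u B, F s u := by
  have h1 : ∀ s ∈ Finset.Icc A B, ∑ u ∈ Finset.Icc A s, F s u
      = ∑ u ∈ Finset.Icc A B, if u ≤ s then F s u else 0 := by
    intro s hs
    simp only [Finset.mem_Icc] at hs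
    have he : Finset.Icc A s = (Finset.Icc A B).filter (fun u => u ≤ s) := by
      ext x; simp only [Finset.mem_filter, Finset.mem_Icc]; omega
    rw [he, Finset.sum_filter]
  have h2 : ∀ u ∈ Finset.Icc A B, ∑ s ∈ Finset.Icc u B, F s u
      = ∑ s ∈ Finset.Icc A B, if u ≤ s then F s u else 0 := by
    intro u hu
    simp only [Finset.mem_Icc] at hu
    have he : Finset.Icc u B = (Finset.Icc A B).filter (fun s => u ≤ s) := by
      ext x; simp only [Finset.mem_filter, Finset.mem_Icc]; omega
    rw [he, Finset.sum_filter]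
  rw [Finset.sum_congr rfl h1, Finset.sum_congr rfl h2, Finset.sum_comm]

theorem caputo_integration_by_parts (α : ℝ) (hα0 : 0 < α) (hα1 : α < 1)
    (a b : ℤ) (hab : a < b) (f g : ℤ → ℝ) :
    ∑ s ∈ Finset.Icc (a + 1) (b - 1), g s * caputoLeft α a f s
      = f (b - 1) * rightSum (1 - α) b g (b - 1) - f a * rightSum (1 - α) b g a
        + ∑ s ∈ Finset.Icc (a + 1) (b - 1), f (s - 1) * rightRiemann α b g (s - 1) := by
  set R : ℤ → ℝ := fun u => rightSum (1 - α) b g u with hR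
  -- Step 1: expand LHS into a double sum
  have hL : ∀ s, g s * caputoLeft α a f s
      = ∑ u ∈ Finset.Icc (a + 1) s,
          (1 / Real.Gamma (1 - α)) * rising ((s - u + 1 : ℤ) : ℝ) (1 - α - 1)
            * (f u - f (u - 1)) * g s := by
    intro s
    simp only [caputoLeft, leftSum]
    rw [Finset.mul_sum, Finset.mul_sum]
    apply Finset.sum_congr rfl
    intro u _
    ring
  -- Step 2: Fubini
  have hswap := sum_swap_Icc (a + 1) (b - 1)
    (fun s u => (1 / Real.Gamma (1 - α)) * rising ((s - u + 1 : ℤ) : ℝ) (1 - α - 1)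
          * (f u - f (u - 1)) * g s)
  -- Step 3: inner sum equals (∇f)(u) * R u
  have hinner : ∀ u, ∑ s ∈ Finset.Icc u (b - 1),
      (1 / Real.Gamma (1 - α)) * rising ((s - u + 1 : ℤ) : ℝ) (1 - α - 1)
        * (f u - f (u - 1)) * g s
      = (f u - f (u - 1)) * R u := by
    intro u
    simp only [hR, rightSum]
    rw [Finset.mul_sum, Finset.mul_sum]
    apply Finset.sum_congr rfl
    intro s _
    ring
  have hmain : ∑ s ∈ Finset.Icc (a + 1) (b - 1), g s * caputoLeft α a f s
      = ∑ u ∈ Finset.Icc (a + 1) (b - 1), (f u - f (u - 1)) * R u := by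
    rw [Finset.sum_congr rfl (fun s _ => hL s), hswap]
    exact Finset.sum_congr rfl (fun u _ => hinner u)
  rw [hmain,
    show rightSum (1 - α) b g (b - 1) = R (b - 1) from rfl,
    show rightSum (1 - α) b g a = R a from rfl]
  -- Step 4: Abel summation
  have hRR : ∀ s : ℤ, rightRiemann α b g (s - 1) = R (s - 1) - R s := by
    intro s
    simp only [rightRiemann, hR, sub_add_cancel]
  have htel := sum_telescope_Icc a (b - 1) (by omega) (fun u => f u * R u)
  have hsplit : ∑ u ∈ Finset.Icc (a + 1) (b - 1), (f u - f (u - 1)) * R u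
      = ∑ u ∈ Finset.Icc (a + 1) (b - 1), (f u * R u - f (u - 1) * R (u - 1))
        + ∑ u ∈ Finset.Icc (a + 1) (b - 1), f (u - 1) * (R (u - 1) - R u) := by
    rw [← Finset.sum_add_distrib]
    apply Finset.sum_congr rfl
    intro u _
    ring
  rw [hsplit, htel]
  congr 1
  apply Finset.sum_congr rfl
  intro s _
  rw [hRR s]
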